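/- Non-submodularity of the objective (Proposition 4): there exist n ∈ ℕ, nonnegative row-stochastic matrices A and W, parameters λ_i, β_i ∈ (0,1], an opinion control set C^Y ⊆ V, and action control sets S, T ⊆ V such that φ(S, C^Y) + φ(T, C^Y) < φ(S ∪ T, C^Y) + φ(S ∩ T, C^Y); in particular, the set function C^X ↦ φ(C^X, C^Y) is not submodular. -/

import Mathlib

/-- The quantity `δ_i(z)` determining the best-response action. -/
noncomputable def delta (n : ℕ) (A W : Fin n → Fin n → ℝ) (l b : Fin n → ℝ)
    (i : Fin n) (x y : Fin n → ℝ) : ℝ :=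
  2 * b i * (1 - l i) * ∑ j, W i j * y j + (1 - b i) * ∑ j, A i j * x j

/-- Assumption 1 on the revision sequence: there is `T < ∞` such that every
agent activates at least once in every window of `T` consecutive time steps. -/
def RevOK (n : ℕ) (R : ℕ → Finset (Fin n)) : Prop :=
  ∃ T : ℕ, ∀ t : ℕ, ∀ i : Fin n, ∃ s, s < T ∧ i ∈ R (t + s)

/-- The controlled coevolutionary trajectory with control sets `CX, CY`:
controlled coordinates are pinned to `+1` for all `t ≥ 0`, uncontrolled ones
start at `-1` and follow the best-response dynamics when activated. -/
def IsCtrlTraj (n : ℕ) (A W : Fin n → Fin n → ℝ) (l b : Fin n → ℝ)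
    (R : ℕ → Finset (Fin n)) (CX CY : Finset (Fin n))
    (x y : ℕ → Fin n → ℝ) : Prop :=
  (∀ i ∈ CX, ∀ t, x t i = 1) ∧
  (∀ i ∈ CY, ∀ t, y t i = 1) ∧
  (∀ i, i ∉ CX → x 0 i = -1) ∧
  (∀ i, i ∉ CY → y 0 i = -1) ∧
  (∀ t, ∀ i, i ∉ CX →
    x (t + 1) i =
      if i ∈ R t then
        if 0 < delta n A W l b i (x t) (y t) then 1
        else if delta n A W l b i (x t) (y t) < 0 then -1
        else x t i
      else x t i) ∧
  (∀ t, ∀ i, i ∉ CY →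
    y (t + 1) i =
      if i ∈ R t then (1 - l i) * (∑ j, W i j * y t j) + l i * x (t + 1) i
      else y t i)

/-- The trajectory reaches the `+1` consensus (actions) in finite time. -/
def Reaches (n : ℕ) (x : ℕ → Fin n → ℝ) : Prop :=
  ∃ T : ℕ, ∀ t, T ≤ t → ∀ i, x t i = 1

open Classical in
/-- The objective: phi = 1 iff for every revision sequence satisfying
Assumption 1, the controlled trajectory reaches the +1 consensus. -/
noncomputable def phi (n : ℕ) (A W : Fin n → Fin n → ℝ) (l b : Fin n → ℝ)
    (CX CY : Finset (Fin n)) : ℕ :=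
  if ∀ (R : ℕ → Finset (Fin n)) (x y : ℕ → Fin n → ℝ),
      RevOK n R → IsCtrlTraj n A W l b R CX CY x y → Reaches n x
  then 1 else 0

/-!
Take three agents with `λ ≡ 1` (so opinions never enter `δ`): agents `0` and `1` only look at
themselves, while agent `2` weighs `0` and `1` equally and ignores itself. Controlling the action of
only one of `0`, `1` leaves the other stuck at `-1` forever, so `φ({0}) = φ({1}) = 0`. Once both
are controlled, agent `2` sees `δ₂ = 1/2 > 0` at all times and switches to `+1` at its first
activation, so `φ({0, 1}) = 1`.
-/

open Finset

section ControlledDynamics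

variable {n : ℕ} {A W : Fin n → Fin n → ℝ} {l b : Fin n → ℝ}

theorem exists_isCtrlTraj (R : ℕ → Finset (Fin n)) (CX CY : Finset (Fin n)) :
    ∃ x y, IsCtrlTraj n A W l b R CX CY x y := by
  classical
  let step : ℕ → (Fin n → ℝ) × (Fin n → ℝ) → (Fin n → ℝ) × (Fin n → ℝ) := fun t z =>
    let x' : Fin n → ℝ := fun i =>
      if i ∈ CX then 1
      else if i ∈ R t then
        if 0 < delta n A W l b i z.1 z.2 then 1
        else if delta n A W l b i z.1 z.2 < 0 then -1
        else z.1 i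
      else z.1 i
    (x', fun i =>
      if i ∈ CY then 1
      else if i ∈ R t then (1 - l i) * (∑ j, W i j * z.2 j) + l i * x' i
      else z.2 i)
  let z : ℕ → (Fin n → ℝ) × (Fin n → ℝ) := fun t =>
    Nat.rec (fun i => if i ∈ CX then 1 else -1, fun i => if i ∈ CY then 1 else -1) step t
  refine ⟨fun t => (z t).1, fun t => (z t).2, ?_, ?_, ?_, ?_, ?_, ?_⟩
  · rintro i hi (_ | t) <;> simp [z, step, hi]
  · rintro i hi (_ | t) <;> simp [z, step, hi]
  · intro i hi; simp [z, hi]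
  · intro i hi; simp [z, hi]
  · intro t i hi; simp [z, step, hi]
  · intro t i hi; simp [z, step, hi]

variable {R : ℕ → Finset (Fin n)} {CX CY : Finset (Fin n)} {x y : ℕ → Fin n → ℝ} {i : Fin n}

theorem IsCtrlTraj.x_succ_eq_neg_one (h : IsCtrlTraj n A W l b R CX CY x y) (hi : i ∉ CX)
    {t : ℕ} (hx : x t i = -1) (hδ : delta n A W l b i (x t) (y t) ≤ 0) :
    x (t + 1) i = -1 := by
  obtain ⟨-, -, -, -, hx_succ, -⟩ := h
  rw [hx_succ t i hi]
  split_ifs <;> first | rfl | linarith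

theorem IsCtrlTraj.x_succ_eq_one (h : IsCtrlTraj n A W l b R CX CY x y) (hi : i ∉ CX)
    {t : ℕ} (hx : i ∈ R t ∨ x t i = 1) (hδ : 0 < delta n A W l b i (x t) (y t)) :
    x (t + 1) i = 1 := by
  obtain ⟨-, -, -, -, hx_succ, -⟩ := h
  rw [hx_succ t i hi]
  split_ifs with hR <;> first | rfl | linarith | exact hx.resolve_left hR

theorem IsCtrlTraj.x_eq_neg_one_of_delta_nonpos (h : IsCtrlTraj n A W l b R CX CY x y)
    (hi : i ∉ CX) (hδ : ∀ t, x t i = -1 → delta n A W l b i (x t) (y t) ≤ 0) (t : ℕ) :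
    x t i = -1 := by
  induction t with
  | zero => exact h.2.2.1 i hi
  | succ t ih => exact h.x_succ_eq_neg_one hi ih (hδ t ih)

theorem IsCtrlTraj.x_eq_one_of_delta_pos (h : IsCtrlTraj n A W l b R CX CY x y)
    (hi : i ∉ CX) (hδ : ∀ t, 0 < delta n A W l b i (x t) (y t)) {s : ℕ} (hs : i ∈ R s)
    {t : ℕ} (hst : s < t) : x t i = 1 := by
  induction t, hst using Nat.le_induction with
  | base => exact h.x_succ_eq_one hi (.inl hs) (hδ s)
  | succ t _ ih => exact h.x_succ_eq_one hi (.inr ih) (hδ t)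

end ControlledDynamics

theorem reaches_of_forall_eventually {n : ℕ} {x : ℕ → Fin n → ℝ}
    (h : ∀ i, ∃ T, ∀ t, T ≤ t → x t i = 1) : Reaches n x := by
  choose T hT using h
  exact ⟨univ.sup T, fun t ht i => hT i t ((le_sup (mem_univ i)).trans ht)⟩

section Phi

variable {n : ℕ} {A W : Fin n → Fin n → ℝ} {l b : Fin n → ℝ} {CX CY : Finset (Fin n)}

theorem phi_eq_zero_of_stuck (i : Fin n) (hi : i ∉ CX)
    (hδ : ∀ x y : Fin n → ℝ, x i = -1 → delta n A W l b i x y ≤ 0) :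
    phi n A W l b CX CY = 0 := by
  classical
  refine if_neg fun hφ => ?_
  have hR : RevOK n fun _ => univ := ⟨1, fun _ j => ⟨0, one_pos, mem_univ j⟩⟩
  obtain ⟨x, y, h⟩ := exists_isCtrlTraj (A := A) (W := W) (l := l) (b := b) _ CX CY
  obtain ⟨T, hT⟩ := hφ _ x y hR h
  have hxT := h.x_eq_neg_one_of_delta_nonpos hi (fun t hx => hδ _ _ hx) T
  linarith [hT T le_rfl i]

theorem phi_eq_one_of_delta_pos
    (hδ : ∀ i ∉ CX, ∀ x y : Fin n → ℝ, (∀ j ∈ CX, x j = 1) → 0 < delta n A W l b i x y) :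
    phi n A W l b CX CY = 1 := by
  classical
  refine if_pos fun R x y ⟨T, hT⟩ h => reaches_of_forall_eventually fun i => ?_
  by_cases hi : i ∈ CX
  · exact ⟨0, fun t _ => h.1 i hi t⟩
  · obtain ⟨s, -, hs⟩ := hT 0 i
    rw [zero_add] at hs
    exact ⟨s + 1, fun t hst =>
      h.x_eq_one_of_delta_pos hi (fun t => hδ i hi _ _ fun j hj => h.1 j hj t) hs hst⟩

end Phi

namespace Counterexample

noncomputable def A : Fin 3 → Fin 3 → ℝ := ![![1, 0, 0], ![0, 1, 0], ![1 / 2, 1 / 2, 0]]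

def W : Fin 3 → Fin 3 → ℝ := ![![1, 0, 0], ![0, 1, 0], ![0, 0, 1]]

def l : Fin 3 → ℝ := fun _ => 1

noncomputable def b : Fin 3 → ℝ := fun _ => 1 / 2

theorem A_rowStochastic :
    (∀ i j, 0 ≤ A i j) ∧ (∀ i j, A i j ≤ 1) ∧ (∀ i, ∑ j, A i j = 1) := by
  refine ⟨fun i j => ?_, fun i j => ?_, fun i => ?_⟩ <;> fin_cases i <;> (try fin_cases j) <;>
    simp [A, Fin.sum_univ_three] <;> norm_num

theorem W_rowStochastic :
    (∀ i j, 0 ≤ W i j) ∧ (∀ i j, W i j ≤ 1) ∧ (∀ i, ∑ j, W i j = 1) := by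
  refine ⟨fun i j => ?_, fun i j => ?_, fun i => ?_⟩ <;> fin_cases i <;> (try fin_cases j) <;>
    simp [W, Fin.sum_univ_three]

theorem delta_eq (i : Fin 3) (x y : Fin 3 → ℝ) :
    delta 3 A W l b i x y = (∑ j, A i j * x j) / 2 := by
  simp only [delta, l, b]
  ring

theorem delta_of_ne_two {j : Fin 3} (hj : j ≠ 2) (x y : Fin 3 → ℝ) :
    delta 3 A W l b j x y = x j / 2 := by
  rw [delta_eq]
  fin_cases j <;> simp [A, Fin.sum_univ_three] at hj ⊢

theorem delta_two (x y : Fin 3 → ℝ) : delta 3 A W l b 2 x y = (x 0 + x 1) / 4 := by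
  rw [delta_eq]
  simp [A, Fin.sum_univ_three]
  ring

theorem phi_eq_zero_of_notMem {CX CY : Finset (Fin 3)} {j : Fin 3} (hj : j ∉ CX)
    (hj2 : j ≠ 2) : phi 3 A W l b CX CY = 0 :=
  phi_eq_zero_of_stuck j hj fun x y hx => by rw [delta_of_ne_two hj2, hx]; norm_num

theorem phi_pair_eq_one {CY : Finset (Fin 3)} : phi 3 A W l b {0, 1} CY = 1 := by
  refine phi_eq_one_of_delta_pos fun i hi x y hx => ?_
  have hi2 : i = 2 := by fin_cases i <;> simp_all
  rw [hi2, delta_two, hx 0 (by simp), hx 1 (by simp)]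
  norm_num

end Counterexample

open Counterexample in
/-- Proposition 4, non-submodularity of the objective. -/
theorem phi_not_submodular :
    ∃ (n : ℕ) (A W : Fin n → Fin n → ℝ) (l b : Fin n → ℝ),
      (∀ i j, 0 ≤ A i j) ∧ (∀ i j, A i j ≤ 1) ∧ (∀ i, ∑ j, A i j = 1) ∧
      (∀ i j, 0 ≤ W i j) ∧ (∀ i j, W i j ≤ 1) ∧ (∀ i, ∑ j, W i j = 1) ∧
      (∀ i, 0 < l i ∧ l i ≤ 1) ∧ (∀ i, 0 < b i ∧ b i ≤ 1) ∧
      ∃ (CY S T : Finset (Fin n)),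
        phi n A W l b S CY + phi n A W l b T CY <
          phi n A W l b (S ∪ T) CY + phi n A W l b (S ∩ T) CY := by
  refine ⟨3, A, W, l, b, A_rowStochastic.1, A_rowStochastic.2.1, A_rowStochastic.2.2,
    W_rowStochastic.1, W_rowStochastic.2.1, W_rowStochastic.2.2,
    fun _ => ⟨one_pos, le_rfl⟩, fun _ => ⟨by norm_num [b], by norm_num [b]⟩, ∅, {0}, {1}, ?_⟩
  have h0 : phi 3 A W l b {0} ∅ = 0 := phi_eq_zero_of_notMem (j := 1) (by decide) (by decide)
  have h1 : phi 3 A W l b {1} ∅ = 0 := phi_eq_zero_of_notMem (j := 0) (by decide) (by decide)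
  have h01 : phi 3 A W l b ({0} ∪ {1}) ∅ = 1 := phi_pair_eq_one
  rw [h0, h1, h01]
  omega
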